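/- arXiv:2302.07987 — 2 statements merged into one kernel-verified Lean document; each statement's English description precedes it below -/
import Mathlib

section
/- Let N ≥ 1 and let v be a prime with v ∤ N. Let γ_v = [[1,0],[0,v]] ∈ GL₂(ℚ). If z ∈ ℙ¹(ℚ) satisfies γ_v · z ∈ Γ₀(N)·∞, then z ∈ Γ₀(N)·∞. In other words, the matrix γ_v stabilizes the set C = ℙ¹(ℚ) − Γ₀(N)·∞. -/
open Matrix CongruenceSubgroup

abbrev SL2Z := Matrix.SpecialLinearGroup (Fin 2) ℤ
abbrev P1 := Projectivization ℚ (Fin 2 → ℚ)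

noncomputable def glAct (g : GL (Fin 2) ℚ) (x : P1) : P1 :=
  Projectivization.map
    ((Matrix.toLinearEquiv' (g : Matrix (Fin 2) (Fin 2) ℚ) g.invertible).toLinearMap)
    (LinearEquiv.injective _) x

noncomputable def slAct (g : SL2Z) : P1 → P1 :=
  glAct (Matrix.SpecialLinearGroup.toGL
    (Matrix.SpecialLinearGroup.map (Int.castRingHom ℚ) g))

noncomputable def inf : P1 := Projectivization.mk ℚ ![1, 0] (by intro h; simpa using congrFun h 0)

noncomputable def ratPt (q : ℚ) : P1 :=
  Projectivization.mk ℚ ![q, 1] (by intro h; simpa using congrFun h 1)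

def orbitInf (N : ℕ) : Set P1 := {x | ∃ γ ∈ Gamma0 N, slAct γ inf = x}

/-! Write `z = [a : c]` with `a, c` coprime integers. Every integral representative `[A : C]` of a
point `γ ∞ = [γ₀₀ : γ₁₀]` of `Γ₀(N)·∞` has `N ∣ γ₁₀ ∣ C`, because `(γ₀₀, γ₁₀)` is primitive. Applied
to `γ_v z = [a : v c]` this gives `N ∣ v c`, hence `N ∣ c` as `v ∤ N`; and a primitive column
`(a, c)` with `N ∣ c` is the first column of a matrix in `Γ₀(N)`. -/

open Projectivization

lemma mul_eq_mul_of_mk_eq_mk {K : Type*} [Field K] {x y x' y' : K} {hw : ![x, y] ≠ 0}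
    {hw' : ![x', y'] ≠ 0} (h : mk K ![x, y] hw = mk K ![x', y'] hw') : x * y' = x' * y := by
  obtain ⟨t, ht⟩ := (mk_eq_mk_iff' K _ _ hw hw').1 h
  have hx : t * x' = x := by simpa using congrFun ht 0
  have hy : t * y' = y := by simpa using congrFun ht 1
  rw [← hx, ← hy]
  ring

lemma intVec_ne_zero {a c : ℤ} (h : IsCoprime a c) : ![(a : ℚ), c] ≠ 0 := by
  intro h0
  have ha : a = 0 := by simpa using congrFun h0 0
  have hc : c = 0 := by simpa using congrFun h0 1
  exact not_isCoprime_zero_zero (ha ▸ hc ▸ h)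

lemma glAct_mk_of_mulVec_eq (g : GL (Fin 2) ℚ) {w w' : Fin 2 → ℚ} (hw : w ≠ 0) (hw' : w' ≠ 0)
    (h : (g : Matrix (Fin 2) (Fin 2) ℚ) *ᵥ w = w') : glAct g (mk ℚ w hw) = mk ℚ w' hw' := by
  subst h
  rw [glAct, map_mk]
  rfl

lemma slAct_inf (γ : SL2Z) :
    slAct γ inf = mk ℚ ![(γ 0 0 : ℚ), (γ 1 0 : ℚ)] (intVec_ne_zero (γ.isCoprime_col 0)) := by
  refine glAct_mk_of_mulVec_eq _ _ _ ?_
  ext i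
  fin_cases i <;> simp [Matrix.SpecialLinearGroup.toGL]

lemma exists_isCoprime_eq_mk (z : P1) :
    ∃ (a c : ℤ) (h : IsCoprime a c), z = mk ℚ ![(a : ℚ), c] (intVec_ne_zero h) := by
  induction z using Projectivization.ind with | h w hw => ?_
  by_cases h1 : w 1 = 0
  · refine ⟨1, 0, isCoprime_one_left, (mk_eq_mk_iff' ℚ _ _ hw _).2 ⟨w 0, ?_⟩⟩
    ext i
    fin_cases i <;> simp [h1]
  · obtain ⟨q, hq⟩ : ∃ q : ℚ, w 0 / w 1 = q := ⟨_, rfl⟩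
    have hden : (q.den : ℚ) ≠ 0 := by exact_mod_cast q.den_ne_zero
    refine ⟨q.num, q.den, Int.isCoprime_iff_gcd_eq_one.2 q.reduced,
      (mk_eq_mk_iff' ℚ _ _ hw _).2 ⟨w 1 / q.den, ?_⟩⟩
    ext i
    fin_cases i
    · simp only [Fin.zero_eta, Pi.smul_apply, Matrix.cons_val_zero, smul_eq_mul]
      rw [← Rat.mul_den_eq_num q, ← hq]
      field_simp
    · simp [hden]

lemma mk_mem_orbitInf {N : ℕ} {a c : ℤ} (hac : IsCoprime a c) (hNc : (N : ℤ) ∣ c) :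
    mk ℚ ![(a : ℚ), c] (intVec_ne_zero hac) ∈ orbitInf N := by
  obtain ⟨γ, ha, hc⟩ := hac.exists_SL2_col 0
  refine ⟨γ, Gamma0_mem.2 ?_, ?_⟩
  · rw [hc]
    exact (ZMod.intCast_zmod_eq_zero_iff_dvd c N).2 hNc
  · simp only [slAct_inf, ha, hc]

lemma dvd_of_mk_mem_orbitInf {N : ℕ} {A C : ℤ} {hw : ![(A : ℚ), C] ≠ 0}
    (h : mk ℚ ![(A : ℚ), C] hw ∈ orbitInf N) : (N : ℤ) ∣ C := by
  obtain ⟨γ, hγ, hγA⟩ := h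
  rw [slAct_inf] at hγA
  have hcross : γ 0 0 * C = A * γ 1 0 := by exact_mod_cast mul_eq_mul_of_mk_eq_mk hγA
  have hNγ : (N : ℤ) ∣ γ 1 0 := (ZMod.intCast_zmod_eq_zero_iff_dvd _ N).1 (Gamma0_mem.1 hγ)
  exact hNγ.trans <| (γ.isCoprime_col 0).symm.dvd_of_dvd_mul_left ⟨A, by rw [hcross, mul_comm]⟩

/-- γ_v = [[1,0],[0,v]] with v prime, v ∤ N, stabilizes
C = ℙ¹(ℚ) − Γ₀(N)·∞: if γ_v·z ∈ Γ₀(N)·∞ then z ∈ Γ₀(N)·∞. -/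
theorem stmt3 (N : ℕ) (v : ℕ) (hv : v.Prime) (hvN : ¬ v ∣ N) (z : P1)
    (h : glAct (Matrix.GeneralLinearGroup.mkOfDetNeZero !![(1 : ℚ), 0; 0, (v : ℚ)]
      (by
        rw [Matrix.det_fin_two_of]
        simpa using (Nat.cast_ne_zero (R := ℚ)).mpr hv.ne_zero)) z ∈ orbitInf N) :
    z ∈ orbitInf N := by
  obtain ⟨a, c, hac, rfl⟩ := exists_isCoprime_eq_mk z
  have hw : ![(a : ℚ), ((v * c : ℤ) : ℚ)] ≠ 0 := by
    simpa [hv.ne_zero] using intVec_ne_zero hac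
  rw [glAct_mk_of_mulVec_eq _ _ hw (by ext i; fin_cases i <;> simp [mul_comm])] at h
  have hNv : IsCoprime (N : ℤ) v :=
    Nat.isCoprime_iff_coprime.2 (hv.coprime_iff_not_dvd.2 hvN).symm
  exact mk_mem_orbitInf hac (hNv.dvd_of_dvd_mul_left (dvd_of_mk_mem_orbitInf h))
end

section
/- Let p be an odd prime, s = (p+1)t an even integer, n_k = pks, and λ as above (λ(0)=0, increments ⌊(n−1)/s⌋ − ⌊(n−1)/(ps)⌋). The segment of the polygon {(n, λ(n))} containing the point (n_k, λ(n_k)) in its interior has slope (p−1)k, and its endpoints have x-coordinates n_k − s and n_k + s. -/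
/-!
Since `⌊m/(ps)⌋ = ⌊⌊m/s⌋/p⌋`, the increment `λ(n) − λ(n−1)` only depends on the block
`q = ⌊(n−1)/s⌋`, i.e. on which interval `(qs, (q+1)s]` contains `n`, and equals `q − ⌊q/p⌋`.
Around `n_k = pks` the blocks `q = pk − 2, pk − 1, pk, pk + 1` give the slopes
`(p−1)k − 1, (p−1)k, (p−1)k, (p−1)k + 1`.
-/

/-- λ(0) = 0 and λ(n) = λ(n−1) + ⌊(n−1)/s⌋ − ⌊(n−1)/(ps)⌋. -/
def lam (p s : ℕ) : ℕ → ℕ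
  | 0 => 0
  | n + 1 => lam p s n + (n / s - n / (p * s))

lemma lam_succ (p s m : ℕ) : lam p s (m + 1) = lam p s m + (m / s - m / s / p) := by
  rw [Nat.div_div_eq_div_mul, mul_comm s p]
  rfl

lemma lam_eq_lam_pred_add_of_mem_block {p s q n : ℕ} (h₁ : q * s < n) (h₂ : n ≤ q * s + s) :
    lam p s n = lam p s (n - 1) + (q - q / p) := by
  obtain ⟨m, rfl⟩ : ∃ m, n = m + 1 := ⟨n - 1, by omega⟩
  have hq : m / s = q := Nat.div_eq_of_lt_le (by omega) (by rw [add_one_mul]; omega)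
  rw [lam_succ, hq, Nat.add_sub_cancel]

lemma mul_add_sub_div_eq {p k i : ℕ} (hi : i < p) :
    p * k + i - (p * k + i) / p = (p - 1) * k + i := by
  have hkp : k ≤ p * k := Nat.le_mul_of_pos_left k (by omega)
  rw [Nat.mul_add_div (by omega), Nat.div_eq_of_lt hi, Nat.sub_one_mul]
  omega

lemma mul_sub_sub_div_eq {p k i : ℕ} (hk : 0 < k) (hi₀ : 0 < i) (hi : i ≤ p) :
    p * k - i - (p * k - i) / p = (p - 1) * k + 1 - i := by
  obtain ⟨k, rfl⟩ : ∃ k', k = k' + 1 := ⟨k - 1, by omega⟩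
  have h := mul_add_sub_div_eq (k := k) (show p - i < p by omega)
  rw [show p * (k + 1) - i = p * k + (p - i) by rw [mul_add_one]; omega, h, mul_add_one]
  omega

theorem stmt16_general (p t k : ℕ) (hp : p.Prime) (ht : 1 ≤ t) (hk : 1 ≤ k) :
    (∀ n : ℕ, p * k * ((p + 1) * t) - (p + 1) * t < n → n ≤ p * k * ((p + 1) * t) + (p + 1) * t →
      lam p ((p + 1) * t) n = lam p ((p + 1) * t) (n - 1) + (p - 1) * k) ∧
    lam p ((p + 1) * t) (p * k * ((p + 1) * t) - (p + 1) * t)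
      = lam p ((p + 1) * t) (p * k * ((p + 1) * t) - (p + 1) * t - 1) + ((p - 1) * k - 1) ∧
    lam p ((p + 1) * t) (p * k * ((p + 1) * t) + (p + 1) * t + 1)
      = lam p ((p + 1) * t) (p * k * ((p + 1) * t) + (p + 1) * t) + ((p - 1) * k + 1) := by
  have hp₂ := hp.two_le
  set s := (p + 1) * t
  have hs : 0 < s := by positivity
  have h2s : 2 * s ≤ p * k * s := Nat.mul_le_mul_right s (by nlinarith)
  have e₁ : (p * k - 1) * s = p * k * s - s := Nat.sub_one_mul _ _
  have e₂ : (p * k - 2) * s = p * k * s - 2 * s := Nat.sub_mul _ _ _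
  have e₃ : (p * k + 1) * s = p * k * s + s := add_one_mul _ _
  refine ⟨fun n h₁ h₂ => ?_, ?_, ?_⟩
  · rcases le_or_gt n (p * k * s) with h | h
    · rw [lam_eq_lam_pred_add_of_mem_block (q := p * k - 1) (by omega) (by omega),
        mul_sub_sub_div_eq hk one_pos (by omega), Nat.add_sub_cancel]
    · rw [lam_eq_lam_pred_add_of_mem_block (q := p * k) h (by omega)]
      simpa using mul_add_sub_div_eq (k := k) (i := 0) (by omega)
  · rw [lam_eq_lam_pred_add_of_mem_block (q := p * k - 2) (by omega) (by omega),
      mul_sub_sub_div_eq hk two_pos hp₂]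
    omega
  · rw [lam_eq_lam_pred_add_of_mem_block (q := p * k + 1) (by omega) (by omega),
      mul_add_sub_div_eq (by omega)]
    rfl

/-- with s = (p+1)t and n_k = pks, the segment of the polygon {(n, λ(n))}
containing (n_k, λ(n_k)) in its interior has slope (p−1)k and endpoints with x-coordinates
n_k − s and n_k + s: the increments equal (p−1)k exactly on (n_k − s, n_k + s], the increment
at n_k − s is (p−1)k − 1, and the increment at n_k + s + 1 is (p−1)k + 1. -/
theorem stmt16 (p t k : ℕ) (hp : p.Prime) (hodd : Odd p) (ht : 1 ≤ t) (hk : 1 ≤ k) :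
    (∀ n : ℕ, p * k * ((p + 1) * t) - (p + 1) * t < n → n ≤ p * k * ((p + 1) * t) + (p + 1) * t →
      lam p ((p + 1) * t) n = lam p ((p + 1) * t) (n - 1) + (p - 1) * k) ∧
    lam p ((p + 1) * t) (p * k * ((p + 1) * t) - (p + 1) * t)
      = lam p ((p + 1) * t) (p * k * ((p + 1) * t) - (p + 1) * t - 1) + ((p - 1) * k - 1) ∧
    lam p ((p + 1) * t) (p * k * ((p + 1) * t) + (p + 1) * t + 1)
      = lam p ((p + 1) * t) (p * k * ((p + 1) * t) + (p + 1) * t) + ((p - 1) * k + 1) :=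
  stmt16_general p t k hp ht hk
end
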